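/- Let f : X → Y be a continuous surjection between compact Hausdorff spaces. Then f is open if and only if the induced map 2^f : 2^X → 2^Y, K ↦ f[K], is open. -/

import Mathlib

/-- The hyperspace `2^X` of all nonempty closed subsets of `X`. -/
def Hyper (X : Type*) [TopologicalSpace X] : Type _ := {K : Set X // IsClosed K ∧ K.Nonempty}

/-- The Vietoris topology on the hyperspace, generated by the subbasic sets
`{K | K ⊆ U}` and `{K | K ∩ U ≠ ∅}` for `U` open. -/
instance Hyper.instTopologicalSpace (X : Type*) [TopologicalSpace X] :
    TopologicalSpace (Hyper X) :=
  TopologicalSpace.generateFrom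
    ({S | ∃ U : Set X, IsOpen U ∧ S = {K : Hyper X | K.1 ⊆ U}} ∪
     {S | ∃ U : Set X, IsOpen U ∧ S = {K : Hyper X | (K.1 ∩ U).Nonempty}})

/-- The induced map `2^f : 2^X → 2^Y`, `K ↦ f[K]`.  (For closed subsets of a compact
space and continuous `f` into a Hausdorff space the image `f[K]` is closed, so taking
the closure below is redundant and this is indeed `K ↦ f[K]`.) -/
def hyperMap {X Y : Type*} [TopologicalSpace X] [TopologicalSpace Y] (f : X → Y) :
    Hyper X → Hyper Y :=
  fun K => ⟨closure (f '' K.1), isClosed_closure, (K.2.2.image f).closure⟩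

/-! If `f` is open and `K ∈ ⟨U; 𝒱⟩`, shrink `U` by regularity to an open `W ⊇ K` with
`cl W ⊆ U`; every `L` in the open set `⟨f[W]; {f[W ∩ V] | V ∈ 𝒱}⟩ ∋ f[K]` is then the image of
`f⁻¹[L] ∩ cl W ∈ ⟨U; 𝒱⟩`. Conversely, if `2^f` is open then `f[U]` is open, being the preimage
of the open set `2^f {K | K ⊆ U}` under the embedding `y ↦ {y}`. -/

open Set

namespace Hyper

variable {X : Type*} [TopologicalSpace X]

/-- The basic open set `⟨U₁, …, Uₙ⟩` of the Vietoris topology is `vietoris (⋃ᵢ Uᵢ) {U₁, …, Uₙ}`. -/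
def vietoris (U : Set X) (𝒱 : Set (Set X)) : Set (Hyper X) :=
  {K | K.1 ⊆ U ∧ ∀ V ∈ 𝒱, (K.1 ∩ V).Nonempty}

theorem vietoris_inter_vietoris (U U' : Set X) (𝒱 𝒱' : Set (Set X)) :
    vietoris U 𝒱 ∩ vietoris U' 𝒱' = vietoris (U ∩ U') (𝒱 ∪ 𝒱') := by
  ext K
  simp only [vietoris, mem_inter_iff, mem_ofPred_eq, subset_inter_iff, mem_union,
    or_imp, forall_and]
  tauto

theorem isOpen_setOf_subset {U : Set X} (hU : IsOpen U) : IsOpen {K : Hyper X | K.1 ⊆ U} :=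
  TopologicalSpace.isOpen_generateFrom_of_mem (Or.inl ⟨U, hU, rfl⟩)

theorem isOpen_setOf_inter_nonempty {V : Set X} (hV : IsOpen V) :
    IsOpen {K : Hyper X | (K.1 ∩ V).Nonempty} :=
  TopologicalSpace.isOpen_generateFrom_of_mem (Or.inr ⟨V, hV, rfl⟩)

theorem isOpen_vietoris {U : Set X} {𝒱 : Set (Set X)} (hU : IsOpen U) (h𝒱 : 𝒱.Finite)
    (h𝒱o : ∀ V ∈ 𝒱, IsOpen V) : IsOpen (vietoris U 𝒱) := by
  have : vietoris U 𝒱 = {K | K.1 ⊆ U} ∩ ⋂ V ∈ 𝒱, {K : Hyper X | (K.1 ∩ V).Nonempty} := by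
    ext K
    simp [vietoris]
  rw [this]
  exact (isOpen_setOf_subset hU).inter
    (h𝒱.isOpen_biInter fun V hV => isOpen_setOf_inter_nonempty (h𝒱o V hV))

theorem exists_vietoris_subset {O : Set (Hyper X)} (hO : IsOpen O) {K : Hyper X} (hK : K ∈ O) :
    ∃ U 𝒱, IsOpen U ∧ 𝒱.Finite ∧ (∀ V ∈ 𝒱, IsOpen V) ∧ K ∈ vietoris U 𝒱 ∧
      vietoris U 𝒱 ⊆ O := by
  induction hO generalizing K with
  | basic S hS =>
    rcases hS with ⟨U, hU, rfl⟩ | ⟨V, hV, rfl⟩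
    · exact ⟨U, ∅, hU, finite_empty, by simp, ⟨hK, by simp⟩, fun K hK => hK.1⟩
    · refine ⟨univ, {V}, isOpen_univ, finite_singleton V, by simpa using hV,
        ⟨subset_univ _, by simpa using hK⟩, fun K hK => hK.2 V rfl⟩
  | univ => exact ⟨univ, ∅, isOpen_univ, finite_empty, by simp, ⟨subset_univ _, by simp⟩,
      subset_univ _⟩
  | inter S T _ _ ihS ihT =>
    obtain ⟨U, 𝒱, hU, h𝒱, h𝒱o, hKS, hS⟩ := ihS hK.1
    obtain ⟨U', 𝒱', hU', h𝒱', h𝒱'o, hKT, hT⟩ := ihT hK.2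
    refine ⟨U ∩ U', 𝒱 ∪ 𝒱', hU.inter hU', h𝒱.union h𝒱', ?_, ?_, ?_⟩
    · rintro V (hV | hV)
      exacts [h𝒱o V hV, h𝒱'o V hV]
    · rw [← vietoris_inter_vietoris]
      exact ⟨hKS, hKT⟩
    · rw [← vietoris_inter_vietoris]
      exact inter_subset_inter hS hT
  | sUnion 𝒮 _ ih =>
    obtain ⟨S, hS𝒮, hKS⟩ := hK
    obtain ⟨U, 𝒱, hU, h𝒱, h𝒱o, hK, hS⟩ := ih S hS𝒮 hKS
    exact ⟨U, 𝒱, hU, h𝒱, h𝒱o, hK, hS.trans (subset_sUnion_of_mem hS𝒮)⟩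

def singleton [T1Space X] (x : X) : Hyper X :=
  ⟨{x}, isClosed_singleton, singleton_nonempty x⟩

theorem continuous_singleton [T1Space X] : Continuous (singleton : X → Hyper X) := by
  refine continuous_generateFrom_iff.2 ?_
  rintro S (⟨U, hU, rfl⟩ | ⟨V, hV, rfl⟩)
  · simpa [singleton] using hU
  · simpa [singleton] using hV

end Hyper

open Hyper

section hyperMap

variable {X Y : Type*} [TopologicalSpace X] [TopologicalSpace Y]

theorem hyperMap_coe [CompactSpace X] [T2Space Y] {f : X → Y} (hf : Continuous f)
    (K : Hyper X) : (hyperMap f K).1 = f '' K.1 :=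
  (K.2.1.isCompact.image hf).isClosed.closure_eq

theorem hyperMap_singleton [T1Space X] [T1Space Y] (f : X → Y) (x : X) :
    hyperMap f (Hyper.singleton x) = Hyper.singleton (f x) :=
  Subtype.ext <| show closure (f '' {x}) = {f x} by rw [image_singleton, closure_singleton]

theorem preimage_singleton_image_hyperMap_setOf_subset [T1Space X] [T1Space Y] (f : X → Y)
    (U : Set X) : Hyper.singleton ⁻¹' (hyperMap f '' {K | K.1 ⊆ U}) = f '' U := by
  ext y
  constructor
  · rintro ⟨K, hKU, hK⟩
    obtain ⟨x, hx⟩ := K.2.2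
    have hfx : f x ∈ (hyperMap f K).1 := subset_closure (mem_image_of_mem f hx)
    rw [hK] at hfx
    exact ⟨x, hKU hx, hfx⟩
  · rintro ⟨x, hxU, rfl⟩
    exact ⟨Hyper.singleton x, singleton_subset_iff.2 hxU, hyperMap_singleton f x⟩

theorem IsOpenMap.of_hyperMap [T1Space X] [T1Space Y] {f : X → Y}
    (h : IsOpenMap (hyperMap f)) : IsOpenMap f := fun U hU => by
  rw [← preimage_singleton_image_hyperMap_setOf_subset]
  exact (h _ (isOpen_setOf_subset hU)).preimage continuous_singleton

theorem vietoris_image_subset_image_hyperMap {f : X → Y} (hf : Continuous f) {U W : Set X}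
    (hWU : closure W ⊆ U) (𝒱 : Set (Set X)) :
    vietoris (f '' W) ((fun V => f '' (W ∩ V)) '' 𝒱) ⊆ hyperMap f '' vietoris U 𝒱 := by
  rintro L ⟨hLW, hL𝒱⟩
  have hLC : L.1 ⊆ f '' closure W := hLW.trans (image_mono subset_closure)
  have himage : f '' (f ⁻¹' L.1 ∩ closure W) = L.1 := by
    rw [image_preimage_inter, inter_eq_left.2 hLC]
  have hne : (f ⁻¹' L.1 ∩ closure W).Nonempty := by
    rw [← image_nonempty, himage]
    exact L.2.2
  refine ⟨⟨_, (L.2.1.preimage hf).inter isClosed_closure, hne⟩,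
    ⟨inter_subset_right.trans hWU, fun V hV => ?_⟩, ?_⟩
  · obtain ⟨_, hyL, x, ⟨hxW, hxV⟩, rfl⟩ := hL𝒱 _ (mem_image_of_mem _ hV)
    exact ⟨x, ⟨hyL, subset_closure hxW⟩, hxV⟩
  · exact Subtype.ext (by simp only [hyperMap, himage, L.2.1.closure_eq])

theorem IsOpenMap.hyperMap [CompactSpace X] [RegularSpace X] [T2Space Y] {f : X → Y}
    (hf : Continuous f) (hopen : IsOpenMap f) : IsOpenMap (hyperMap f) := by
  refine fun O hO => isOpen_iff_mem_nhds.2 ?_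
  rintro _ ⟨K, hKO, rfl⟩
  obtain ⟨U, 𝒱, hU, h𝒱, h𝒱o, ⟨hKU, hK𝒱⟩, hO⟩ := exists_vietoris_subset hO hKO
  obtain ⟨W, hW, hKW, hWU⟩ := K.2.1.isCompact.exists_isOpen_closure_subset (hU.mem_nhdsSet.2 hKU)
  refine Filter.mem_of_superset (IsOpen.mem_nhds ?_ ?_)
    ((vietoris_image_subset_image_hyperMap hf hWU 𝒱).trans (image_mono hO))
  · exact isOpen_vietoris (hopen _ hW) (h𝒱.image _)
      (forall_mem_image.2 fun V hV => hopen _ (hW.inter (h𝒱o V hV)))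
  · refine ⟨?_, forall_mem_image.2 fun V hV => ?_⟩ <;> rw [hyperMap_coe hf]
    · exact image_mono hKW
    · obtain ⟨x, hxK, hxV⟩ := hK𝒱 V hV
      exact ⟨f x, mem_image_of_mem f hxK, mem_image_of_mem f ⟨hKW hxK, hxV⟩⟩

end hyperMap

theorem isOpenMap_iff_isOpenMap_hyperMap
    {X Y : Type*} [TopologicalSpace X] [CompactSpace X] [T2Space X]
    [TopologicalSpace Y] [T2Space Y]
    {f : X → Y} (hf : Continuous f) :
    IsOpenMap f ↔ IsOpenMap (hyperMap f) :=
  ⟨IsOpenMap.hyperMap hf, IsOpenMap.of_hyperMap⟩
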